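/- arXiv:2206.12750 — 3 statements merged into one kernel-verified Lean document; each statement's English description precedes it below -/
import Mathlib

section
/- Let ρ > 0 and λ > 0, and let (q^k)_{k≥0} ⊆ Q, (s^k)_{k≥0} ⊆ S, (d^k)_{k≥0} ⊆ D, (c^k)_{k≥0} ⊆ S, (b^k)_{k≥0} ⊆ D be sequences such that for every k ≥ 0: (i) q^{k+1} minimizes q ↦ ⟨c^{k+1} + ρ(s^{k+1} − s^k), F(q)⟩ + ⟨b^{k+1} + λ(d^{k+1} − d^k), Φ(q)⟩ over Q; (ii) s^{k+1} minimizes s ↦ H(s) − ⟨c^{k+1}, s⟩ over S; (iii) d^{k+1} minimizes d ↦ G(d) − ⟨b^{k+1}, d⟩ over D; (iv) c^{k+1} = c^k + ρ(F(q^{k+1}) − s^{k+1}) and b^{k+1} = b^k + λ(Φ(q^{k+1}) − d^{k+1}). Suppose there exists a saddle point (s*, d*, q*, b*, c*) of the Lagrangian L; in particular F(q*) = s* and Φ(q*) = d*. Then ‖F(q^k) − s^k‖ → 0 and ‖Φ(q^k) − d^k‖ → 0 as k → ∞, and H(s^k) + G(d^k) → H(s*) + G(d*) as k → ∞. (Theorem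 3.2 of the paper: convergence of the ADMM scheme for the nonlinear-equality constrained problem, which implies convergence of the split Bregman scheme.) -/
/-! The energy `ρ⁻¹‖c - c*‖² + ρ‖s - s*‖² + λ⁻¹‖b - b*‖² + λ‖d - d*‖²` of the iterates decreases
at every step by at least `ρ‖F q - s‖² + ρ‖Δs‖² + λ‖Φ q - d‖² + λ‖Δd‖²`. Indeed, testing the
optimality of `q`, `s`, `d` against the saddle point and adding the saddle inequality gives a
sign for a sum of inner products; the multiplier updates turn these into differences of squared
norms, and the cross terms are absorbed by the monotonicity
`⟪c^{k+1} - c^k, s^{k+1} - s^k⟫ ≥ 0` of the `s`-subproblem (and likewise for `d`).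
So residuals and increments are square summable and all iterates stay bounded; the objective is
then squeezed between the saddle-point lower bound and the upper bound from the optimality
conditions, whose error terms are inner products of a bounded and a vanishing sequence. -/

open Filter Topology
open scoped RealInnerProductSpace

section InnerProductSpace

variable {E : Type*} [NormedAddCommGroup E] [InnerProductSpace ℝ E]

theorem inner_sub_sub_nonneg_of_forall_le {f : E → ℝ} {u u' x x' : E}
    (hx : ∀ z, f x - ⟪u, x⟫ ≤ f z - ⟪u, z⟫) (hx' : ∀ z, f x' - ⟪u', x'⟫ ≤ f z - ⟪u', z⟫) :
    0 ≤ ⟪u' - u, x' - x⟫ := by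
  have h := hx x'
  have h' := hx' x
  simp only [inner_sub_left, inner_sub_right]
  linarith

theorem two_mul_inner_eq_of_sub_eq_smul {t : ℝ} {x y v : E} (h : y - x = t • v) :
    2 * t * ⟪y, v⟫ = ‖y‖ ^ 2 - ‖x‖ ^ 2 + t ^ 2 * ‖v‖ ^ 2 := by
  have := norm_sub_sq_real y (y - x)
  rw [sub_sub_cancel, h, real_inner_smul_right, norm_smul, Real.norm_eq_abs, mul_pow,
    sq_abs] at this
  linarith

noncomputable def admmEnergy (t : ℝ) (y x yStar xStar : E) : ℝ :=
  t⁻¹ * ‖y - yStar‖ ^ 2 + t * ‖x - xStar‖ ^ 2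

theorem admmEnergy_add_le {t : ℝ} (ht : 0 < t) {y x y' x' w yStar xStar : E}
    (hy : y' = y + t • (w - x')) (hmono : 0 ≤ ⟪y' - y, x' - x⟫) :
    admmEnergy t y' x' yStar xStar + t * ‖w - x'‖ ^ 2 + t * ‖x' - x‖ ^ 2 ≤
      admmEnergy t y x yStar xStar + 2 * (⟪y' - yStar, w - x'⟫ + t * ⟪w - xStar, x' - x⟫) := by
  have hmult : 2 * t * ⟪y' - yStar, w - x'⟫ =
      ‖y' - yStar‖ ^ 2 - ‖y - yStar‖ ^ 2 + t ^ 2 * ‖w - x'‖ ^ 2 :=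
    two_mul_inner_eq_of_sub_eq_smul (by rw [hy]; abel)
  have hprimal : 2 * ⟪x' - xStar, x' - x⟫ =
      ‖x' - xStar‖ ^ 2 - ‖x - xStar‖ ^ 2 + ‖x' - x‖ ^ 2 := by
    simpa using two_mul_inner_eq_of_sub_eq_smul (t := 1) (x := x - xStar) (y := x' - xStar)
      (v := x' - x) (by rw [one_smul]; abel)
  have hmono' : 0 ≤ ⟪w - x', x' - x⟫ := by
    rw [hy, add_sub_cancel_left, real_inner_smul_left] at hmono
    exact nonneg_of_mul_nonneg_right hmono ht
  have hsplit : ⟪w - xStar, x' - x⟫ = ⟪w - x', x' - x⟫ + ⟪x' - xStar, x' - x⟫ := by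
    rw [← inner_add_left, sub_add_sub_cancel]
  have hmult' : 2 * ⟪y' - yStar, w - x'⟫ =
      t⁻¹ * (‖y' - yStar‖ ^ 2 - ‖y - yStar‖ ^ 2) + t * ‖w - x'‖ ^ 2 := by
    field_simp
    linear_combination hmult
  unfold admmEnergy
  nlinarith [mul_nonneg ht.le hmono']

end InnerProductSpace

section Limits

variable {ι E : Type*}

theorem tendsto_norm_zero_of_add_mul_sq_le [SeminormedAddCommGroup E] {e : ℕ → ℝ}
    {x : ℕ → E} {t : ℝ} (ht : 0 < t) (he : ∀ k, 0 ≤ e k)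
    (h : ∀ k, e (k + 1) + t * ‖x k‖ ^ 2 ≤ e k) :
    Tendsto (fun k => ‖x k‖) atTop (𝓝 0) := by
  have hpartial : ∀ n, ∑ i ∈ Finset.range n, t * ‖x i‖ ^ 2 ≤ e 0 - e n := by
    intro n
    induction n with
    | zero => simp
    | succ n ih => rw [Finset.sum_range_succ]; linarith [h n]
  have hsum : Summable fun k => t * ‖x k‖ ^ 2 :=
    summable_of_sum_range_le (c := e 0) (fun k => by positivity) fun n => by
      linarith [hpartial n, he n]
  have hsq : Tendsto (fun k => ‖x k‖ ^ 2) atTop (𝓝 0) := by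
    simpa [ht.ne'] using hsum.tendsto_atTop_zero.const_mul t⁻¹
  simpa using hsq.sqrt

theorem isBoundedUnder_norm_of_mul_sq_le [SeminormedAddCommGroup E] {l : Filter ι}
    {x : ι → E} {t C : ℝ} (ht : 0 < t) (h : ∀ i, t * ‖x i‖ ^ 2 ≤ C) :
    IsBoundedUnder (· ≤ ·) l fun i => ‖x i‖ := by
  refine isBoundedUnder_of_eventually_le (a := 1 + C / t) (Eventually.of_forall fun i => ?_)
  have hsq : ‖x i‖ ^ 2 ≤ C / t := by rw [le_div_iff₀ ht]; linarith [h i]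
  nlinarith [sq_nonneg (‖x i‖ - 1), norm_nonneg (x i)]

theorem isBoundedUnder_norm_add [SeminormedAddCommGroup E] {l : Filter ι} {x y : ι → E}
    (hx : IsBoundedUnder (· ≤ ·) l fun i => ‖x i‖) (hy : IsBoundedUnder (· ≤ ·) l fun i => ‖y i‖) :
    IsBoundedUnder (· ≤ ·) l fun i => ‖x i + y i‖ :=
  (isBoundedUnder_le_add hx hy).mono_le (Eventually.of_forall fun i => norm_add_le (x i) (y i))

theorem tendsto_inner_zero_of_isBoundedUnder [NormedAddCommGroup E] [InnerProductSpace ℝ E]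
    {l : Filter ι} {x y : ι → E} (hx : IsBoundedUnder (· ≤ ·) l fun i => ‖x i‖)
    (hy : Tendsto (fun i => ‖y i‖) l (𝓝 0)) :
    Tendsto (fun i => ⟪x i, y i⟫) l (𝓝 0) :=
  (tendsto_zero_iff_norm_tendsto_zero.2 hy).op_zero_isBoundedUnder_le hx
    (fun b a => ⟪a, b⟫) fun b a => (norm_inner_le_norm a b).trans_eq (mul_comm _ _)

end Limits

section ADMM

variable {Q S D : Type*} [NormedAddCommGroup S] [InnerProductSpace ℝ S]
  [NormedAddCommGroup D] [InnerProductSpace ℝ D]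
  {F : Q → S} {Φ : Q → D} {H : S → ℝ} {G : D → ℝ} {ρ lam : ℝ}
  {q : ℕ → Q} {s : ℕ → S} {d : ℕ → D} {c : ℕ → S} {b : ℕ → D}
  {qStar : Q} {sStar cStar : S} {dStar bStar : D}

structure IsADMMIterates (F : Q → S) (Φ : Q → D) (H : S → ℝ) (G : D → ℝ) (ρ lam : ℝ)
    (q : ℕ → Q) (s : ℕ → S) (d : ℕ → D) (c : ℕ → S) (b : ℕ → D) : Prop where
  q_min : ∀ k q',
    ⟪c (k+1) + ρ • (s (k+1) - s k), F (q (k+1))⟫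
        + ⟪b (k+1) + lam • (d (k+1) - d k), Φ (q (k+1))⟫ ≤
      ⟪c (k+1) + ρ • (s (k+1) - s k), F q'⟫ + ⟪b (k+1) + lam • (d (k+1) - d k), Φ q'⟫
  s_min : ∀ k s', H (s (k+1)) - ⟪c (k+1), s (k+1)⟫ ≤ H s' - ⟪c (k+1), s'⟫
  d_min : ∀ k d', G (d (k+1)) - ⟪b (k+1), d (k+1)⟫ ≤ G d' - ⟪b (k+1), d'⟫
  c_succ : ∀ k, c (k+1) = c k + ρ • (F (q (k+1)) - s (k+1))
  b_succ : ∀ k, b (k+1) = b k + lam • (Φ (q (k+1)) - d (k+1))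

namespace IsADMMIterates

theorem objective_add_le (h : IsADMMIterates F Φ H G ρ lam q s d c b)
    (hF : F qStar = sStar) (hΦ : Φ qStar = dStar) (k : ℕ) :
    H (s (k+1)) + G (d (k+1)) + ⟪c (k+1), F (q (k+1)) - s (k+1)⟫
        + ⟪b (k+1), Φ (q (k+1)) - d (k+1)⟫ + ρ * ⟪F (q (k+1)) - sStar, s (k+1) - s k⟫
        + lam * ⟪Φ (q (k+1)) - dStar, d (k+1) - d k⟫ ≤ H sStar + G dStar := by
  have hq := h.q_min k qStar
  have hs := h.s_min k sStar
  have hd := h.d_min k dStar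
  rw [hF, hΦ] at hq
  rw [real_inner_comm (s (k+1) - s k), real_inner_comm (d (k+1) - d k)]
  simp only [inner_add_left, inner_sub_left, inner_sub_right, real_inner_smul_left] at hq ⊢
  linarith

/- `s 0` and `d 0` need not minimize anything, so the monotonicity, and with it the descent,
only holds from step 1 on. -/
theorem energy_add_le (h : IsADMMIterates F Φ H G ρ lam q s d c b) (hρ : 0 < ρ)
    (hlam : 0 < lam) (hF : F qStar = sStar) (hΦ : Φ qStar = dStar)
    (hsad : ∀ s' d' q', H sStar + G dStar ≤
      H s' + G d' + ⟪cStar, F q' - s'⟫ + ⟪bStar, Φ q' - d'⟫) (k : ℕ) :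
    admmEnergy ρ (c (k+2)) (s (k+2)) cStar sStar + admmEnergy lam (b (k+2)) (d (k+2)) bStar dStar
        + (ρ * ‖F (q (k+2)) - s (k+2)‖ ^ 2 + ρ * ‖s (k+2) - s (k+1)‖ ^ 2
          + lam * ‖Φ (q (k+2)) - d (k+2)‖ ^ 2 + lam * ‖d (k+2) - d (k+1)‖ ^ 2) ≤
      admmEnergy ρ (c (k+1)) (s (k+1)) cStar sStar
        + admmEnergy lam (b (k+1)) (d (k+1)) bStar dStar := by
  have hup := h.objective_add_le hF hΦ (k+1)
  have hlow := hsad (s (k+2)) (d (k+2)) (q (k+2))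
  have hS := admmEnergy_add_le (yStar := cStar) (xStar := sStar) hρ (h.c_succ (k+1))
    (inner_sub_sub_nonneg_of_forall_le (h.s_min k) (h.s_min (k+1)))
  have hD := admmEnergy_add_le (yStar := bStar) (xStar := dStar) hlam (h.b_succ (k+1))
    (inner_sub_sub_nonneg_of_forall_le (h.d_min k) (h.d_min (k+1)))
  simp only [inner_sub_left] at hup hlow hS hD
  linarith

theorem tendsto_residuals (h : IsADMMIterates F Φ H G ρ lam q s d c b) (hρ : 0 < ρ)
    (hlam : 0 < lam) (hF : F qStar = sStar) (hΦ : Φ qStar = dStar)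
    (hsad : ∀ s' d' q', H sStar + G dStar ≤
      H s' + G d' + ⟪cStar, F q' - s'⟫ + ⟪bStar, Φ q' - d'⟫) :
    Tendsto (fun k => ‖F (q k) - s k‖) atTop (𝓝 0) ∧
      Tendsto (fun k => ‖Φ (q k) - d k‖) atTop (𝓝 0) ∧
      Tendsto (fun k => ‖s (k+1) - s k‖) atTop (𝓝 0) ∧
      Tendsto (fun k => ‖d (k+1) - d k‖) atTop (𝓝 0) := by
  set e : ℕ → ℝ := fun k => admmEnergy ρ (c (k+1)) (s (k+1)) cStar sStar
    + admmEnergy lam (b (k+1)) (d (k+1)) bStar dStar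
  have he : ∀ k, 0 ≤ e k := fun k => by simp only [e, admmEnergy]; positivity
  have hdesc := h.energy_add_le hρ hlam hF hΦ hsad
  refine ⟨(tendsto_add_atTop_iff_nat 2).1 (tendsto_norm_zero_of_add_mul_sq_le hρ he fun k => ?_),
    (tendsto_add_atTop_iff_nat 2).1 (tendsto_norm_zero_of_add_mul_sq_le hlam he fun k => ?_),
    (tendsto_add_atTop_iff_nat 1).1 (tendsto_norm_zero_of_add_mul_sq_le hρ he fun k => ?_),
    (tendsto_add_atTop_iff_nat 1).1 (tendsto_norm_zero_of_add_mul_sq_le hlam he fun k => ?_)⟩ <;>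
  linarith [hdesc k, mul_nonneg hρ.le (sq_nonneg ‖F (q (k+2)) - s (k+2)‖),
    mul_nonneg hρ.le (sq_nonneg ‖s (k+2) - s (k+1)‖),
    mul_nonneg hlam.le (sq_nonneg ‖Φ (q (k+2)) - d (k+2)‖),
    mul_nonneg hlam.le (sq_nonneg ‖d (k+2) - d (k+1)‖)]

theorem isBoundedUnder_norm_sub (h : IsADMMIterates F Φ H G ρ lam q s d c b) (hρ : 0 < ρ)
    (hlam : 0 < lam) (hF : F qStar = sStar) (hΦ : Φ qStar = dStar)
    (hsad : ∀ s' d' q', H sStar + G dStar ≤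
      H s' + G d' + ⟪cStar, F q' - s'⟫ + ⟪bStar, Φ q' - d'⟫) :
    IsBoundedUnder (· ≤ ·) atTop (fun k => ‖c (k+1) - cStar‖) ∧
      IsBoundedUnder (· ≤ ·) atTop (fun k => ‖s (k+1) - sStar‖) ∧
      IsBoundedUnder (· ≤ ·) atTop (fun k => ‖b (k+1) - bStar‖) ∧
      IsBoundedUnder (· ≤ ·) atTop (fun k => ‖d (k+1) - dStar‖) := by
  set e : ℕ → ℝ := fun k => admmEnergy ρ (c (k+1)) (s (k+1)) cStar sStar
    + admmEnergy lam (b (k+1)) (d (k+1)) bStar dStar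
  have hdesc := h.energy_add_le hρ hlam hF hΦ hsad
  have hanti : Antitone e := antitone_nat_of_succ_le fun k => by
    have : 0 ≤ ρ * ‖F (q (k+2)) - s (k+2)‖ ^ 2 + ρ * ‖s (k+2) - s (k+1)‖ ^ 2
        + lam * ‖Φ (q (k+2)) - d (k+2)‖ ^ 2 + lam * ‖d (k+2) - d (k+1)‖ ^ 2 := by positivity
    linarith [hdesc k]
  have hbound : ∀ k, ρ⁻¹ * ‖c (k+1) - cStar‖ ^ 2 + ρ * ‖s (k+1) - sStar‖ ^ 2
      + (lam⁻¹ * ‖b (k+1) - bStar‖ ^ 2 + lam * ‖d (k+1) - dStar‖ ^ 2) ≤ e 0 :=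
    fun k => hanti (Nat.zero_le k)
  have hnonneg : ∀ k, 0 ≤ ρ⁻¹ * ‖c (k+1) - cStar‖ ^ 2 ∧ 0 ≤ ρ * ‖s (k+1) - sStar‖ ^ 2 ∧
      0 ≤ lam⁻¹ * ‖b (k+1) - bStar‖ ^ 2 ∧ 0 ≤ lam * ‖d (k+1) - dStar‖ ^ 2 :=
    fun k => ⟨by positivity, by positivity, by positivity, by positivity⟩
  refine ⟨isBoundedUnder_norm_of_mul_sq_le (C := e 0) (inv_pos.2 hρ) fun k => ?_,
    isBoundedUnder_norm_of_mul_sq_le (C := e 0) hρ fun k => ?_,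
    isBoundedUnder_norm_of_mul_sq_le (C := e 0) (inv_pos.2 hlam) fun k => ?_,
    isBoundedUnder_norm_of_mul_sq_le (C := e 0) hlam fun k => ?_⟩ <;>
  linarith [hbound k, hnonneg k]

theorem tendsto_objective (h : IsADMMIterates F Φ H G ρ lam q s d c b) (hρ : 0 < ρ)
    (hlam : 0 < lam) (hF : F qStar = sStar) (hΦ : Φ qStar = dStar)
    (hsad : ∀ s' d' q', H sStar + G dStar ≤
      H s' + G d' + ⟪cStar, F q' - s'⟫ + ⟪bStar, Φ q' - d'⟫) :
    Tendsto (fun k => H (s k) + G (d k)) atTop (𝓝 (H sStar + G dStar)) := by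
  obtain ⟨hr, hp, hds, hdd⟩ := h.tendsto_residuals hρ hlam hF hΦ hsad
  obtain ⟨hcb, hsb, hbb, hdb⟩ := h.isBoundedUnder_norm_sub hρ hlam hF hΦ hsad
  have hr₁ := (tendsto_add_atTop_iff_nat 1).2 hr
  have hp₁ := (tendsto_add_atTop_iff_nat 1).2 hp
  have hc : IsBoundedUnder (· ≤ ·) atTop fun k => ‖c (k+1)‖ := by
    simpa using isBoundedUnder_norm_add hcb (isBoundedUnder_const (a := ‖cStar‖))
  have hb : IsBoundedUnder (· ≤ ·) atTop fun k => ‖b (k+1)‖ := by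
    simpa using isBoundedUnder_norm_add hbb (isBoundedUnder_const (a := ‖bStar‖))
  have hFq : IsBoundedUnder (· ≤ ·) atTop fun k => ‖F (q (k+1)) - sStar‖ := by
    simpa using isBoundedUnder_norm_add hr₁.isBoundedUnder_le hsb
  have hΦq : IsBoundedUnder (· ≤ ·) atTop fun k => ‖Φ (q (k+1)) - dStar‖ := by
    simpa using isBoundedUnder_norm_add hp₁.isBoundedUnder_le hdb
  rw [← tendsto_add_atTop_iff_nat 1]
  refine tendsto_of_tendsto_of_tendsto_of_le_of_le (g := fun k => H sStar + G dStar
      - (⟪cStar, F (q (k+1)) - s (k+1)⟫ + ⟪bStar, Φ (q (k+1)) - d (k+1)⟫))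
    (h := fun k => H sStar + G dStar - (⟪c (k+1), F (q (k+1)) - s (k+1)⟫
      + ⟪b (k+1), Φ (q (k+1)) - d (k+1)⟫ + ρ * ⟪F (q (k+1)) - sStar, s (k+1) - s k⟫
      + lam * ⟪Φ (q (k+1)) - dStar, d (k+1) - d k⟫)) ?_ ?_
    (fun k => by linarith [hsad (s (k+1)) (d (k+1)) (q (k+1))])
    (fun k => by linarith [h.objective_add_le hF hΦ k])
  · simpa using tendsto_const_nhds.sub
      ((tendsto_inner_zero_of_isBoundedUnder isBoundedUnder_const hr₁).add
        (tendsto_inner_zero_of_isBoundedUnder isBoundedUnder_const hp₁))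
  · simpa using tendsto_const_nhds.sub
      ((((tendsto_inner_zero_of_isBoundedUnder hc hr₁).add
        (tendsto_inner_zero_of_isBoundedUnder hb hp₁)).add
        ((tendsto_inner_zero_of_isBoundedUnder hFq hds).const_mul ρ)).add
        ((tendsto_inner_zero_of_isBoundedUnder hΦq hdd).const_mul lam))

end IsADMMIterates

end ADMM

theorem stmt_2_general
    {Q S D : Type*}
    [NormedAddCommGroup S] [InnerProductSpace ℝ S]
    [NormedAddCommGroup D] [InnerProductSpace ℝ D]
    (F : Q → S) (Φ : Q → D) (H : S → ℝ) (G : D → ℝ)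
    (L : S → D → Q → D → S → ℝ)
    (hL : ∀ s d q b c,
      L s d q b c = H s + G d + ⟪c, F q - s⟫ + ⟪b, Φ q - d⟫)
    (ρ lam : ℝ) (hρ : 0 < ρ) (hlam : 0 < lam)
    (q : ℕ → Q) (s : ℕ → S) (d : ℕ → D) (c : ℕ → S) (b : ℕ → D)
    (hq : ∀ (k : ℕ) (q' : Q),
      ⟪c (k+1) + ρ • (s (k+1) - s k), F (q (k+1))⟫
        + ⟪b (k+1) + lam • (d (k+1) - d k), Φ (q (k+1))⟫ ≤
      ⟪c (k+1) + ρ • (s (k+1) - s k), F q'⟫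
        + ⟪b (k+1) + lam • (d (k+1) - d k), Φ q'⟫)
    (hs : ∀ (k : ℕ) (s' : S),
      H (s (k+1)) - ⟪c (k+1), s (k+1)⟫ ≤ H s' - ⟪c (k+1), s'⟫)
    (hd : ∀ (k : ℕ) (d' : D),
      G (d (k+1)) - ⟪b (k+1), d (k+1)⟫ ≤ G d' - ⟪b (k+1), d'⟫)
    (hc : ∀ k : ℕ, c (k+1) = c k + ρ • (F (q (k+1)) - s (k+1)))
    (hb : ∀ k : ℕ, b (k+1) = b k + lam • (Φ (q (k+1)) - d (k+1)))
    (sStar : S) (dStar : D) (qStar : Q) (bStar : D) (cStar : S)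
    (hSaddle : ∀ (s' : S) (d' : D) (q' : Q) (b' : D) (c' : S),
      L sStar dStar qStar b' c' ≤ L sStar dStar qStar bStar cStar ∧
      L sStar dStar qStar bStar cStar ≤ L s' d' q' bStar cStar)
    (hFstar : F qStar = sStar) (hΦstar : Φ qStar = dStar) :
    Filter.Tendsto (fun k => ‖F (q k) - s k‖) Filter.atTop (nhds 0) ∧
    Filter.Tendsto (fun k => ‖Φ (q k) - d k‖) Filter.atTop (nhds 0) ∧
    Filter.Tendsto (fun k => H (s k) + G (d k)) Filter.atTop
      (nhds (H sStar + G dStar)) := by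
  have h : IsADMMIterates F Φ H G ρ lam q s d c b := ⟨hq, hs, hd, hc, hb⟩
  have hsad : ∀ s' d' q', H sStar + G dStar ≤
      H s' + G d' + ⟪cStar, F q' - s'⟫ + ⟪bStar, Φ q' - d'⟫ := fun s' d' q' => by
    simpa [hL, hFstar, hΦstar] using (hSaddle s' d' q' bStar cStar).2
  obtain ⟨hr, hp, -⟩ := h.tendsto_residuals hρ hlam hFstar hΦstar hsad
  exact ⟨hr, hp, h.tendsto_objective hρ hlam hFstar hΦstar hsad⟩

/-- Theorem 3.2 of the paper: convergence of the ADMM scheme for the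
nonlinear-equality constrained problem. -/
theorem stmt_2
    {Q S D : Type*}
    [NormedAddCommGroup Q] [InnerProductSpace ℝ Q]
    [NormedAddCommGroup S] [InnerProductSpace ℝ S]
    [NormedAddCommGroup D] [InnerProductSpace ℝ D]
    (F : Q → S) (Φ : Q → D) (H : S → ℝ) (G : D → ℝ)
    (L : S → D → Q → D → S → ℝ)
    (hL : ∀ s d q b c,
      L s d q b c = H s + G d + ⟪c, F q - s⟫ + ⟪b, Φ q - d⟫)
    (ρ lam : ℝ) (hρ : 0 < ρ) (hlam : 0 < lam)
    (q : ℕ → Q) (s : ℕ → S) (d : ℕ → D) (c : ℕ → S) (b : ℕ → D)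
    (hq : ∀ (k : ℕ) (q' : Q),
      ⟪c (k+1) + ρ • (s (k+1) - s k), F (q (k+1))⟫
        + ⟪b (k+1) + lam • (d (k+1) - d k), Φ (q (k+1))⟫ ≤
      ⟪c (k+1) + ρ • (s (k+1) - s k), F q'⟫
        + ⟪b (k+1) + lam • (d (k+1) - d k), Φ q'⟫)
    (hs : ∀ (k : ℕ) (s' : S),
      H (s (k+1)) - ⟪c (k+1), s (k+1)⟫ ≤ H s' - ⟪c (k+1), s'⟫)
    (hd : ∀ (k : ℕ) (d' : D),
      G (d (k+1)) - ⟪b (k+1), d (k+1)⟫ ≤ G d' - ⟪b (k+1), d'⟫)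
    (hc : ∀ k : ℕ, c (k+1) = c k + ρ • (F (q (k+1)) - s (k+1)))
    (hb : ∀ k : ℕ, b (k+1) = b k + lam • (Φ (q (k+1)) - d (k+1)))
    (sStar : S) (dStar : D) (qStar : Q) (bStar : D) (cStar : S)
    (hSaddle : ∀ (s' : S) (d' : D) (q' : Q) (b' : D) (c' : S),
      L sStar dStar qStar b' c' ≤ L sStar dStar qStar bStar cStar ∧
      L sStar dStar qStar bStar cStar ≤ L s' d' q' bStar cStar)
    (hFstar : F qStar = sStar) (hΦstar : Φ qStar = dStar) :
    Filter.Tendsto (fun k => ‖F (q k) - s k‖) Filter.atTop (nhds 0) ∧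
    Filter.Tendsto (fun k => ‖Φ (q k) - d k‖) Filter.atTop (nhds 0) ∧
    Filter.Tendsto (fun k => H (s k) + G (d k)) Filter.atTop
      (nhds (H sStar + G dStar)) :=
  stmt_2_general F Φ H G L hL ρ lam hρ hlam q s d c b hq hs hd hc hb sStar dStar qStar bStar cStar
    hSaddle hFstar hΦstar
end

section
/- Let μ > 0 and ρ > 0, let z ∈ V, and let (s^k)_{k≥0}, (c^k)_{k≥0}, (w^k)_{k≥1} be sequences in V satisfying, for every k ≥ 0, s^{k+1} = (μ/(μ+ρ)) z + (ρ/(μ+ρ)) (w^{k+1} + c^k) and c^{k+1} = c^k + (w^{k+1} − s^{k+1}). If s^0 − (ρ/μ) c^0 = z, then s^k − (ρ/μ) c^k = z for every k ≥ 0. (Identity (2.18) of the paper, where w^{k+1} = F(q^{k+1}); it shows the simplified ADMM scheme reduces to the split Bregman scheme.) -/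
/-! The invariant is not propagated from step to step: the `s`-update followed by the multiplier
update forces `s^{k+1} - (ρ/μ) c^{k+1} = z` whatever `c^k` and `w^{k+1}` are, so the hypothesis
at `k = 0` is needed only for the initial iterate. -/

theorem admm_update_sub_smul_multiplier_eq {V : Type*} [AddCommGroup V] [Module ℝ V]
    {μ ρ : ℝ} (hμ : μ ≠ 0) (hμρ : μ + ρ ≠ 0) {z c w s' c' : V}
    (hs : s' = (μ / (μ + ρ)) • z + (ρ / (μ + ρ)) • (w + c)) (hc : c' = c + (w - s')) :
    s' - (ρ / μ) • c' = z := by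
  subst hc hs
  match_scalars <;> field_simp <;> ring

/-- Identity (2.18) of the paper: the invariant `s^k - (ρ/μ) c^k = z` is preserved
by the simplified ADMM updates, where `w^{k+1} = F(q^{k+1})`. -/
theorem stmt_4 {V : Type*} [AddCommGroup V] [Module ℝ V]
    (μ ρ : ℝ) (hμ : 0 < μ) (hρ : 0 < ρ) (z : V)
    (s c w : ℕ → V)
    (hs : ∀ k : ℕ,
      s (k+1) = (μ/(μ+ρ)) • z + (ρ/(μ+ρ)) • (w (k+1) + c k))
    (hc : ∀ k : ℕ, c (k+1) = c k + (w (k+1) - s (k+1)))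
    (h0 : s 0 - (ρ/μ) • c 0 = z) :
    ∀ k : ℕ, s k - (ρ/μ) • c k = z := by
  rintro (_ | k)
  · exact h0
  · exact admm_update_sub_smul_multiplier_eq hμ.ne' (by positivity) (hs k) (hc k)
end

section
/- Let X and Y be real normed spaces, let F : X → Y be Lipschitz continuous on a neighborhood of q ∈ X, and let J : Y → ℝ be Fréchet differentiable at s = F(q) with derivative J'(s) ∈ Y*. Define the scalar function ⟨J'(s), F⟩ : X → ℝ by p ↦ J'(s)(F(p)). Then the Fréchet subdifferentials coincide: ∂(J ∘ F)(q) = ∂⟨J'(s), F⟩(q); i.e., a continuous linear functional q* belongs to ∂(J ∘ F)(q) if and only if it belongs to ∂⟨J'(s), F⟩(q). (Lemma 4.2 of the paper, the chain rule for Fréchet subdifferentials, with the local Lipschitz hypothesis on F making it precise.) -/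
open Filter Topology

/-- The Fréchet subdifferential of a functional `I : X → ℝ` at `q`: the set of
continuous linear functionals `f` with
`liminf_{p→q, p≠q} (I(p) - I(q) - f(p-q))/‖p-q‖ ≥ 0`
(the liminf is taken in `EReal` so that it is always well defined). -/
def frechetSubdiff {X : Type*} [NormedAddCommGroup X] [NormedSpace ℝ X]
    (I : X → ℝ) (q : X) : Set (X →L[ℝ] ℝ) :=
  {f | 0 ≤ Filter.liminf
    (fun p => (((I p - I q - f (p - q)) / ‖p - q‖ : ℝ) : EReal)) (𝓝[≠] q)}

/-! The local Lipschitz bound gives `F p - F q = O(p - q)`, so the Fréchet remainder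
`J (F p) - J (F q) - J' (F p - F q)` of `J` at `F q`, composed with `F`, is `o(p - q)`.
Two functionals whose increments at `q` differ by `o(p - q)` have the same Fréchet
subdifferential there: their difference quotients differ by a term tending to `0`, which does
not affect the sign of the liminf. -/

lemma liminf_coe_nonneg_of_tendsto_sub {α : Type*} {l : Filter α} {u v : α → ℝ}
    (h : Tendsto (fun p => v p - u p) l (𝓝 0))
    (hu : 0 ≤ liminf (fun p => (u p : EReal)) l) :
    0 ≤ liminf (fun p => (v p : EReal)) l := by
  rw [le_liminf_iff] at hu ⊢
  intro b hb
  induction b using EReal.rec with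
  | bot => exact Eventually.of_forall fun p => EReal.bot_lt_coe _
  | top => exact absurd hb (by simp)
  | coe c =>
    have hc : c < 0 := by exact_mod_cast hb
    have hu_half : ∀ᶠ p in l, c / 2 < u p := by
      have hc_half : ((c / 2 : ℝ) : EReal) < 0 := by exact_mod_cast (by linarith : c / 2 < 0)
      filter_upwards [hu _ hc_half] with p hp
      exact_mod_cast hp
    have hvu_small : ∀ᶠ p in l, c / 2 < v p - u p :=
      h.eventually (lt_mem_nhds (by linarith))
    filter_upwards [hu_half, hvu_small] with p hp₁ hp₂
    exact_mod_cast (by linarith : c < v p)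

section FrechetSubdiff

variable {X : Type*} [NormedAddCommGroup X] [NormedSpace ℝ X]

lemma frechetSubdiff_subset_of_isLittleO {I₁ I₂ : X → ℝ} {q : X}
    (h : (fun p => I₁ p - I₁ q - (I₂ p - I₂ q)) =o[𝓝 q] fun p => p - q) :
    frechetSubdiff I₂ q ⊆ frechetSubdiff I₁ q := by
  intro f hf
  refine liminf_coe_nonneg_of_tendsto_sub ?_ hf
  refine (h.norm_right.tendsto_div_nhds_zero.mono_left nhdsWithin_le_nhds).congr fun p => ?_
  ring

lemma frechetSubdiff_eq_of_isLittleO {I₁ I₂ : X → ℝ} {q : X}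
    (h : (fun p => I₁ p - I₁ q - (I₂ p - I₂ q)) =o[𝓝 q] fun p => p - q) :
    frechetSubdiff I₁ q = frechetSubdiff I₂ q :=
  (frechetSubdiff_subset_of_isLittleO h).antisymm' <| frechetSubdiff_subset_of_isLittleO <|
    h.neg_left.congr_left fun p => by ring

end FrechetSubdiff

lemma LipschitzOnWith.isBigO_sub {X Y : Type*} [SeminormedAddCommGroup X]
    [SeminormedAddCommGroup Y] {F : X → Y} {K : NNReal} {U : Set X} {q : X}
    (hF : LipschitzOnWith K F U) (hU : U ∈ 𝓝 q) :
    (fun p => F p - F q) =O[𝓝 q] fun p => p - q :=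
  Asymptotics.IsBigO.of_bound K <| by
    filter_upwards [hU] with p hp
    simpa only [dist_eq_norm] using hF.dist_le_mul p hp q (mem_of_mem_nhds hU)

/-- Lemma 4.2 of the paper (chain rule for Fréchet subdifferentials): if `F` is
Lipschitz on a neighborhood of `q` and `J` is Fréchet differentiable at `s = F(q)`
with derivative `J'(s)`, then `∂(J ∘ F)(q) = ∂⟨J'(s), F⟩(q)`. -/
theorem stmt_9 {X Y : Type*}
    [NormedAddCommGroup X] [NormedSpace ℝ X]
    [NormedAddCommGroup Y] [NormedSpace ℝ Y]
    (F : X → Y) (q : X) (K : NNReal) (U : Set X) (hU : U ∈ 𝓝 q)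
    (hF : LipschitzOnWith K F U)
    (J : Y → ℝ) (J' : Y →L[ℝ] ℝ) (hJ : HasFDerivAt J J' (F q)) :
    ∀ qs : X →L[ℝ] ℝ,
      qs ∈ frechetSubdiff (fun p => J (F p)) q ↔
      qs ∈ frechetSubdiff (fun p => J' (F p)) q := by
  have hFq : Tendsto F (𝓝 q) (𝓝 (F q)) := hF.continuousOn.continuousAt hU
  have hlin : (fun p => J (F p) - J (F q) - J' (F p - F q)) =o[𝓝 q] fun p => p - q :=
    (hJ.isLittleO.comp_tendsto hFq).trans_isBigO (hF.isBigO_sub hU)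
  intro qs
  rw [frechetSubdiff_eq_of_isLittleO (I₂ := fun p => J' (F p))
    (hlin.congr_left fun p => by simp only [map_sub])]
end
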